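/- For n odd, the number of n×n skew-symmetric (alternating) matrices over GF(q) of rank n-1 equals q^{(n-1)(n-3)/4} · ∏_{i=1}^{(n-1)/2} (q^{2i+1} - 1). -/

import Mathlib

/-!
Bordering an alternating matrix `B` by a column `c` and the row `-cᵀ` keeps its rank when `c`
lies in the column space of `B` and raises it by two otherwise. Hence the number `N(m, r)` of
alternating `m × m` matrices of rank `r` over `𝔽_q` satisfies
`N(m + 1, r + 2) = q ^ (r + 2) N(m, r + 2) + (q ^ m - q ^ r) N(m, r)`, which is solved by
`N(m, 2s) · |Sp_{2s}(𝔽_q)| = ∏_{i < 2s} (q ^ m - q ^ i)`, the number of linearly independent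
`2s`-tuples in `𝔽_q ^ m`. For `m = 2s + 1` the right-hand side factors as
`|Sp_{2s}(𝔽_q)| · q ^ (s (s - 1)) · ∏_{i = 1}^{s} (q ^ (2i + 1) - 1)`.
-/

open Matrix

namespace Matrix

variable {ι κ m n F : Type*}

def IsAlt [Neg F] [Zero F] (A : Matrix ι ι F) : Prop := Aᵀ = -A ∧ ∀ i, A i i = 0

def border [Neg F] [Zero F] (B : Matrix ι ι F) (c : ι → F) : Matrix (ι ⊕ Unit) (ι ⊕ Unit) F :=
  fromBlocks B (replicateCol Unit c) (-replicateRow Unit c) 0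

section AddGroup

variable [AddGroup F]

theorem isAlt_reindex_iff (e : ι ≃ κ) {A : Matrix ι ι F} :
    (reindex e e A).IsAlt ↔ A.IsAlt := by
  have hneg : -reindex e e A = reindex e e (-A) := rfl
  rw [IsAlt, IsAlt, transpose_reindex, hneg, (reindex e e).injective.eq_iff]
  exact and_congr_right' (e.symm.forall_congr_left.trans (by simp))

theorem IsAlt.border {B : Matrix ι ι F} (hB : B.IsAlt) (c : ι → F) : (border B c).IsAlt := by
  refine ⟨?_, ?_⟩
  · ext (i | i) (j | j)
    · exact congr_fun₂ hB.1 i j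
    all_goals simp [Matrix.border]
  · rintro (i | i)
    · exact hB.2 i
    · rfl

theorem IsAlt.toBlocks₁₁ {A : Matrix (ι ⊕ κ) (ι ⊕ κ) F} (hA : A.IsAlt) : A.toBlocks₁₁.IsAlt :=
  ⟨by ext i j; exact congr_fun₂ hA.1 (.inl i) (.inl j), fun i => hA.2 (.inl i)⟩

theorem IsAlt.eq_border {A : Matrix (ι ⊕ Unit) (ι ⊕ Unit) F} (hA : A.IsAlt) :
    A = Matrix.border A.toBlocks₁₁ (fun i => A (Sum.inl i) (Sum.inr ())) := by
  ext (i | ⟨⟩) (j | ⟨⟩)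
  · rfl
  · rfl
  · simpa [Matrix.border] using congr_fun₂ hA.1 (Sum.inl j) (Sum.inr ())
  · simpa [Matrix.border] using hA.2 (Sum.inr ())

theorem border_eq_fromCols (B : Matrix ι ι F) (c : ι → F) :
    border B c =
      fromCols (fromRows B (-replicateRow Unit c)) (replicateCol Unit (Sum.elim c 0)) := by
  rw [border, ← fromCols_fromRows_eq_fromBlocks]
  congr
  ext (i | i) j <;> rfl

end AddGroup

theorem IsAlt.dotProduct_mulVec_self [Fintype ι] [CommRing F] {A : Matrix ι ι F}
    (hA : A.IsAlt) (x : ι → F) : x ⬝ᵥ A *ᵥ x = 0 := by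
  simp only [dotProduct, mulVec, Finset.mul_sum, ← Finset.sum_product']
  refine Finset.sum_involution (fun p _ => p.swap) (fun p _ => ?_) (fun p _ hp hswap => ?_)
    (fun _ _ => Finset.mem_univ _) (fun _ _ => rfl)
  · have := congr_fun₂ hA.1 p.1 p.2
    simp only [transpose_apply, neg_apply] at this
    simp only [Prod.fst_swap, Prod.snd_swap, this]
    ring
  · obtain ⟨i, j⟩ := p
    obtain rfl : j = i := (Prod.ext_iff.1 hswap).1
    simp [hA.2] at hp

section Field

variable [Field F]

theorem rank_eq_zero_iff [Fintype n] {A : Matrix m n F} : A.rank = 0 ↔ A = 0 := by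
  classical
  rw [rank, Submodule.finrank_eq_zero, LinearMap.range_eq_bot, ← toLin'_apply',
    LinearEquiv.map_eq_zero_iff]

theorem rank_neg [Fintype n] (A : Matrix m n F) : (-A).rank = A.rank := by
  have : (-A).mulVecLin = -A.mulVecLin := by ext; simp
  rw [rank, this, LinearMap.range_neg, rank]

theorem range_mulVecLin_fromCols_replicateCol [Fintype n] (N : Matrix m n F) (v : m → F) :
    LinearMap.range (fromCols N (replicateCol Unit v)).mulVecLin =
      LinearMap.range N.mulVecLin ⊔ Submodule.span F {v} := by
  have hcols : Set.range (fromCols N (replicateCol Unit v)).col = Set.range N.col ∪ {v} := by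
    rw [col, transpose_fromCols]
    exact (Set.Sum.elim_range _ _).trans (congrArg _ (Set.range_const (c := v)))
  rw [range_mulVecLin, range_mulVecLin, hcols, Submodule.span_union]

variable [Fintype n] {N : Matrix m n F} {v : m → F}

theorem rank_fromCols_replicateCol_of_mem (hv : v ∈ LinearMap.range N.mulVecLin) :
    (fromCols N (replicateCol Unit v)).rank = N.rank := by
  rw [rank, range_mulVecLin_fromCols_replicateCol,
    sup_eq_left.2 ((Submodule.span_singleton_le_iff_mem _ _).2 hv), rank]

theorem rank_fromCols_replicateCol_of_notMem [Fintype m] (hv : v ∉ LinearMap.range N.mulVecLin) :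
    (fromCols N (replicateCol Unit v)).rank = N.rank + 1 := by
  rw [rank, range_mulVecLin_fromCols_replicateCol, Submodule.finrank_sup_span_singleton hv, rank]

end Field

section Border

variable [Fintype ι] [Field F] {B : Matrix ι ι F} {c : ι → F}

theorem rank_fromRows_neg_replicateRow (hB : Bᵀ = -B) (c : ι → F) :
    (fromRows B (-replicateRow Unit c)).rank = (fromCols B (replicateCol Unit c)).rank := by
  rw [← rank_transpose, transpose_fromRows, hB, transpose_neg, transpose_replicateRow,
    ← fromCols_neg, rank_neg]

theorem rank_border_of_mem (hB : B.IsAlt) (hc : c ∈ LinearMap.range B.mulVecLin) :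
    (border B c).rank = B.rank := by
  obtain ⟨x, rfl⟩ := hc
  have hx : fromRows B (-replicateRow Unit (B *ᵥ x)) *ᵥ x = Sum.elim (B *ᵥ x) 0 := by
    rw [fromRows_mulVec, neg_mulVec, replicateRow_mulVec_eq_const, dotProduct_comm,
      hB.dotProduct_mulVec_self]
    simp
  rw [mulVecLin_apply, border_eq_fromCols, rank_fromCols_replicateCol_of_mem ⟨x, hx⟩,
    rank_fromRows_neg_replicateRow hB.1, rank_fromCols_replicateCol_of_mem (v := B *ᵥ x) ⟨x, rfl⟩]

theorem rank_border_of_notMem (hB : Bᵀ = -B) (hc : c ∉ LinearMap.range B.mulVecLin) :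
    (border B c).rank = B.rank + 2 := by
  have hc' : Sum.elim c 0 ∉ LinearMap.range (fromRows B (-replicateRow Unit c)).mulVecLin := by
    rintro ⟨w, hw⟩
    refine hc ⟨w, ?_⟩
    simpa [fromRows_mulVec] using congrArg (· ∘ Sum.inl) hw
  rw [border_eq_fromCols, rank_fromCols_replicateCol_of_notMem hc',
    rank_fromRows_neg_replicateRow hB, rank_fromCols_replicateCol_of_notMem hc]

end Border

end Matrix

noncomputable def altRankCount (F : Type*) [Field F] (ι : Type*) [Fintype ι] (r : ℕ) : ℕ :=
  Nat.card {A : Matrix ι ι F // A.IsAlt ∧ A.rank = r}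

section Counting

variable (F : Type*) [Field F] {ι κ : Type*} [Fintype ι] [Fintype κ]

theorem altRankCount_congr (e : ι ≃ κ) (r : ℕ) : altRankCount F ι r = altRankCount F κ r :=
  Nat.card_congr <| (reindex e e).subtypeEquiv fun A => by
    rw [isAlt_reindex_iff, rank_reindex]

theorem altRankCount_zero : altRankCount F ι 0 = 1 :=
  Nat.card_eq_one_iff_exists.2
    ⟨⟨0, ⟨by simp, fun _ => rfl⟩, rank_zero⟩, fun A => Subtype.ext (rank_eq_zero_iff.1 A.2.2)⟩

theorem altRankCount_eq_zero_of_card_lt {r : ℕ} (h : Fintype.card ι < r) :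
    altRankCount F ι r = 0 :=
  Nat.card_eq_zero.2 <| .inl ⟨fun A => (A.2.2 ▸ A.1.rank_le_card_width).not_gt h⟩

noncomputable def altBorderEquiv (r : ℕ) :
    {A : Matrix (ι ⊕ Unit) (ι ⊕ Unit) F // A.IsAlt ∧ A.rank = r} ≃
      Σ B : {B : Matrix ι ι F // B.IsAlt}, {c : ι → F // (border B.1 c).rank = r} where
  toFun A := ⟨⟨A.1.toBlocks₁₁, A.2.1.toBlocks₁₁⟩,
    ⟨fun i => A.1 (.inl i) (.inr ()), by rw [← A.2.1.eq_border, A.2.2]⟩⟩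
  invFun p := ⟨border p.1.1 p.2.1, p.1.2.border _, p.2.2⟩
  left_inv A := Subtype.ext A.2.1.eq_border.symm
  right_inv _ := rfl

variable {F} in
theorem natCard_border_rank_eq_add_two [Fintype F] {B : Matrix ι ι F} (hB : B.IsAlt) (r : ℕ) :
    (Nat.card {c // (border B c).rank = r + 2} : ℤ) =
      (if B.rank = r + 2 then (Fintype.card F : ℤ) ^ (r + 2) else 0) +
        if B.rank = r then (Fintype.card F : ℤ) ^ Fintype.card ι - (Fintype.card F : ℤ) ^ r
        else 0 := by
  classical
  set R := LinearMap.range B.mulVecLin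
  have hR : Fintype.card R = Fintype.card F ^ B.rank := Module.card_eq_pow_finrank
  have hfiber {P : (ι → F) → Prop} (hmem : ∀ c ∈ R, B.rank = r + 2 ↔ P c)
      (hnotMem : ∀ c ∉ R, B.rank = r ↔ P c) :
      Nat.card {c // (border B c).rank = r + 2} = Nat.card {c // P c} := by
    refine Nat.card_congr (Equiv.subtypeEquivRight fun c => ?_)
    by_cases hc : c ∈ R
    · rw [rank_border_of_mem hB hc, hmem c hc]
    · rw [rank_border_of_notMem hB.1 hc, ← hnotMem c hc, Nat.add_right_cancel_iff]
  by_cases h₂ : B.rank = r + 2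
  · rw [if_pos h₂, if_neg (by omega), add_zero,
      hfiber (P := (· ∈ R)) (by simp [h₂]) (by simp [h₂]), Nat.card_eq_fintype_card]
    exact_mod_cast hR.trans (by rw [h₂])
  by_cases h₀ : B.rank = r
  · rw [if_neg h₂, if_pos h₀, zero_add, hfiber (P := (· ∉ R)) (by simp [h₂]) (by simp [h₀]),
      Nat.card_eq_fintype_card, Fintype.card_subtype_compl, Fintype.card_fun, hR, h₀,
      Nat.cast_sub (Nat.pow_le_pow_right Fintype.card_pos (h₀ ▸ B.rank_le_card_width))]
    push_cast
    rfl
  · rw [if_neg h₂, if_neg h₀, add_zero, hfiber (P := fun _ => False) (by simp [h₂]) (by simp [h₀])]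
    simp

open Classical in
theorem sum_isAlt_ite_rank_eq [Fintype F] (k : ℕ) (a : ℤ) :
    ∑ B : {B : Matrix ι ι F // B.IsAlt}, (if B.1.rank = k then a else 0) =
      altRankCount F ι k * a := by
  rw [Finset.sum_ite, Finset.sum_const_zero, add_zero, Finset.sum_const, nsmul_eq_mul,
    ← Fintype.card_subtype, ← Nat.card_eq_fintype_card,
    Nat.card_congr (Equiv.subtypeSubtypeEquivSubtypeInter IsAlt (fun A => A.rank = k)),
    altRankCount]

theorem altRankCount_sum_unit [Fintype F] (r : ℕ) :
    (altRankCount F (ι ⊕ Unit) (r + 2) : ℤ) =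
      altRankCount F ι (r + 2) * (Fintype.card F : ℤ) ^ (r + 2) +
        altRankCount F ι r *
          ((Fintype.card F : ℤ) ^ Fintype.card ι - (Fintype.card F : ℤ) ^ r) := by
  classical
  rw [altRankCount, Nat.card_congr (altBorderEquiv F (r + 2)), Nat.card_sigma, Nat.cast_sum,
    Fintype.sum_congr _ _ fun B => natCard_border_rank_eq_add_two B.2 r, Finset.sum_add_distrib,
    sum_isAlt_ite_rank_eq, sum_isAlt_ite_rank_eq]

end Counting

section FrameCount

variable {R : Type*} [CommRing R] (q : R)

def frameCount (m k : ℕ) : R := ∏ i ∈ Finset.range k, (q ^ m - q ^ i)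

def symplecticOrder (s : ℕ) : R := q ^ (s ^ 2) * ∏ i ∈ Finset.range s, (q ^ (2 * i + 2) - 1)

theorem frameCount_zero_succ (k : ℕ) : frameCount q 0 (k + 1) = 0 :=
  Finset.prod_eq_zero (Finset.mem_range.2 k.succ_pos) (sub_self _)

theorem frameCount_succ (m k : ℕ) :
    frameCount q m (k + 1) = frameCount q m k * (q ^ m - q ^ k) :=
  Finset.prod_range_succ _ _

theorem frameCount_succ_succ (m k : ℕ) :
    frameCount q (m + 1) (k + 1) = (q ^ (m + 1) - 1) * q ^ k * frameCount q m k := by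
  have h (i : ℕ) : q ^ (m + 1) - q ^ (i + 1) = q * (q ^ m - q ^ i) := by ring
  rw [frameCount, Finset.prod_range_succ', pow_zero, mul_comm]
  simp_rw [h, Finset.prod_mul_distrib, Finset.prod_const, Finset.card_range, frameCount]
  ring

theorem symplecticOrder_succ (s : ℕ) :
    symplecticOrder q (s + 1) = symplecticOrder q s * q ^ (2 * s + 1) * (q ^ (2 * s + 2) - 1) := by
  rw [symplecticOrder, symplecticOrder, Finset.prod_range_succ]
  ring

theorem symplecticOrder_pos [LinearOrder R] [IsStrictOrderedRing R] {q : R} (hq : 1 < q)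
    (s : ℕ) : 0 < symplecticOrder q s :=
  mul_pos (pow_pos (zero_lt_one.trans hq) _)
    (Finset.prod_pos fun _ _ => sub_pos.2 (one_lt_pow₀ hq (by omega)))

theorem frameCount_odd (s : ℕ) :
    frameCount q (2 * s + 1) (2 * s) =
      symplecticOrder q s * q ^ (s * (s - 1)) * ∏ i ∈ Finset.Icc 1 s, (q ^ (2 * i + 1) - 1) := by
  induction s with
  | zero => simp [frameCount, symplecticOrder]
  | succ s ih =>
    have hexp : (s + 1) * (s + 1 - 1) = s * (s - 1) + 2 * s := by
      rcases s with _ | s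
      · rfl
      · simp only [Nat.add_sub_cancel]
        ring
    rw [show 2 * (s + 1) + 1 = 2 * s + 1 + 1 + 1 by ring, show 2 * (s + 1) = 2 * s + 1 + 1 by ring,
      frameCount_succ_succ, frameCount_succ_succ, ih, symplecticOrder_succ,
      Finset.prod_Icc_succ_top (by omega), hexp]
    ring

end FrameCount

theorem altRankCount_mul_symplecticOrder (F : Type*) [Field F] [Fintype F] (m s : ℕ) :
    (altRankCount F (Fin m) (2 * s) : ℤ) * symplecticOrder (Fintype.card F : ℤ) s =
      frameCount (Fintype.card F : ℤ) m (2 * s) := by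
  induction m generalizing s with
  | zero =>
    cases s with
    | zero => simp [altRankCount_zero, frameCount, symplecticOrder]
    | succ s =>
      rw [altRankCount_eq_zero_of_card_lt F (by simp), show 2 * (s + 1) = 2 * s + 1 + 1 by ring,
        frameCount_zero_succ, Nat.cast_zero, zero_mul]
  | succ m ih =>
    cases s with
    | zero => simp [altRankCount_zero, frameCount, symplecticOrder]
    | succ s =>
      have h := ih (s + 1)
      rw [show 2 * (s + 1) = 2 * s + 1 + 1 by ring, frameCount_succ, frameCount_succ,
        symplecticOrder_succ] at h
      rw [← altRankCount_congr F (Fintype.equivOfCardEq (by simp) : Fin m ⊕ Unit ≃ Fin (m + 1)),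
        show 2 * (s + 1) = 2 * s + 2 by ring, altRankCount_sum_unit, Fintype.card_fin,
        symplecticOrder_succ, frameCount_succ_succ, frameCount_succ]
      set q : ℤ := (Fintype.card F : ℤ)
      linear_combination q ^ (2 * s + 2) * h +
        (q ^ m - q ^ (2 * s)) * q ^ (2 * s + 1) * (q ^ (2 * s + 2) - 1) * ih s

theorem altRankCount_corank_one (F : Type*) [Field F] [Fintype F] (s : ℕ) :
    altRankCount F (Fin (2 * s + 1)) (2 * s) =
      Fintype.card F ^ (s * (s - 1)) *
        ∏ i ∈ Finset.Icc 1 s, (Fintype.card F ^ (2 * i + 1) - 1) := by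
  have key := altRankCount_mul_symplecticOrder F (2 * s + 1) s
  rw [frameCount_odd, mul_comm, mul_assoc] at key
  have hpos : 0 < symplecticOrder (Fintype.card F : ℤ) s :=
    symplecticOrder_pos (by exact_mod_cast Fintype.one_lt_card) s
  rw [← Nat.cast_inj (R := ℤ), mul_left_cancel₀ hpos.ne' key]
  push_cast [Nat.cast_prod, Nat.cast_sub (Nat.one_le_pow _ _ Fintype.card_pos)]
  rfl

theorem card_corank_one_alternating_matrices_general {q n : ℕ} (hodd : Odd n)
    {F : Type*} [Field F] [Fintype F] (hF : Fintype.card F = q) :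
    Set.ncard {A : Matrix (Fin n) (Fin n) F |
        Matrix.transpose A = -A ∧ (∀ i, A i i = 0) ∧ A.rank = n - 1} =
      q ^ ((n - 1) * (n - 3) / 4) *
        ∏ i ∈ Finset.Icc 1 ((n - 1) / 2), (q ^ (2 * i + 1) - 1) := by
  obtain ⟨s, rfl⟩ := hodd
  subst hF
  have hexp : (2 * s + 1 - 1) * (2 * s + 1 - 3) / 4 = s * (s - 1) := by
    rcases s with _ | s
    · rfl
    · rw [show 2 * (s + 1) + 1 - 3 = 2 * s by omega]
      exact Nat.div_eq_of_eq_mul_left (by norm_num) (by simp only [Nat.add_sub_cancel]; ring)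
  rw [hexp, show (2 * s + 1 - 1) / 2 = s by omega, ← altRankCount_corank_one, ← Nat.card_coe_set_eq,
    Nat.add_sub_cancel]
  exact Nat.card_congr (Equiv.subtypeEquivRight fun A => by simp [IsAlt, and_assoc])

/-- For `n` odd, the number of `n × n` skew-symmetric (alternating) matrices over `GF(q)`
of rank `n - 1` equals `q^((n-1)(n-3)/4) ⋅ ∏_{i=1}^{(n-1)/2} (q^(2i+1) - 1)`. -/
theorem card_corank_one_alternating_matrices {q n : ℕ} (hn : 3 ≤ n) (hodd : Odd n)
    {F : Type*} [Field F] [Fintype F] (hF : Fintype.card F = q) :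
    Set.ncard {A : Matrix (Fin n) (Fin n) F |
        Matrix.transpose A = -A ∧ (∀ i, A i i = 0) ∧ A.rank = n - 1} =
      q ^ ((n - 1) * (n - 3) / 4) *
        ∏ i ∈ Finset.Icc 1 ((n - 1) / 2), (q ^ (2 * i + 1) - 1) :=
  card_corank_one_alternating_matrices_general hodd hF
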